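/- arXiv:1701.07416 — 3 statements merged into one kernel-verified Lean document; each statement's English description precedes it below -/
import Mathlib

section
/- Let n, w, t be integers with 1 ≤ w ≤ n and 1 ≤ t ≤ n, let e ∈ F₂ⁿ be a vector of Hamming weight t, and let i be a coordinate with e_i = 1. Then the number of vectors h ∈ F₂ⁿ of Hamming weight w with h_i = 1 and ⟨e,h⟩ = 1 (inner product modulo 2) equals Σ_{0≤j≤w−1, j even} C(t−1,j)·C(n−t,w−1−j). Consequently, since the number of weight-w vectors h with h_i = 1 is C(n−1,w−1), the probability q₁ that ⟨e,h⟩ = 1 for h uniform on {h : w_H(h)=w, h_i=1} equals (Σ_{0≤j≤w−1, j even} C(t−1,j)·C(n−t,w−1−j))/C(n−1,w−1), which depends neither on e nor on i. -/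
/-!
Identify a binary vector with its support, so that `⟨e, h⟩` is the parity of
`#(supp e ∩ supp h)`. If `i ∈ supp e ∩ supp h`, this is odd exactly when the other `w - 1`
positions of `h` meet `supp e \ {i}` (of size `t - 1`) in an even number `j` of places; the
remaining `w - 1 - j` positions lie outside `supp e` (of size `n - t`). Counting these choices
for each even `j` gives the sum of products of binomials.
-/

open Finset

namespace Finset

variable {α : Type*} [DecidableEq α]

lemma card_filter_powersetCard_succ_mem {s : Finset α} {a : α} (ha : a ∈ s) (k : ℕ)
    (p : Finset α → Prop) [DecidablePred p] :
    #{S ∈ powersetCard (k + 1) s | a ∈ S ∧ p S} =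
      #{T ∈ powersetCard k (s.erase a) | p (insert a T)} := by
  refine (card_nbij' (insert a) (erase · a) ?_ ?_ ?_ ?_).symm
  · intro T hT
    simp only [coe_filter, mem_powersetCard, Set.mem_ofPred_eq] at hT ⊢
    have haT : a ∉ T := fun h => by simpa using hT.1.1 h
    refine ⟨⟨insert_subset ha (hT.1.1.trans (erase_subset a s)), ?_⟩, mem_insert_self a T, hT.2⟩
    rw [card_insert_of_notMem haT, hT.1.2]
  · intro S hS
    simp only [coe_filter, mem_powersetCard, Set.mem_ofPred_eq] at hS ⊢
    refine ⟨⟨erase_subset_erase a hS.1.1, ?_⟩, ?_⟩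
    · rw [card_erase_of_mem hS.2.1, hS.1.2, Nat.add_sub_cancel]
    · rw [insert_erase hS.2.1]; exact hS.2.2
  · intro T hT
    have haT : a ∉ T := fun h => by simpa using (mem_powersetCard.mp (mem_filter.mp hT).1).1 h
    exact erase_insert haT
  · intro S hS
    exact insert_erase (mem_filter.mp hS).2.1

lemma card_filter_powersetCard_card_inter_eq (A U : Finset α) {m j : ℕ} (hj : j ≤ m) :
    #{S ∈ powersetCard m U | #(A ∩ S) = j} =
      (#(A ∩ U)).choose j * (#(U \ A)).choose (m - j) := by
  rw [← card_powersetCard, ← card_powersetCard, ← card_product]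
  refine card_nbij' (fun S => (A ∩ S, S \ A)) (fun P => P.1 ∪ P.2) ?_ ?_ ?_ ?_
  · intro S hS
    simp only [coe_filter, mem_powersetCard, Set.mem_ofPred_eq, coe_product, Set.mem_prod,
      mem_coe] at hS ⊢
    refine ⟨⟨inter_subset_inter_left hS.1.1, hS.2⟩, sdiff_subset_sdiff hS.1.1 le_rfl, ?_⟩
    have := card_inter_add_card_sdiff S A
    rw [inter_comm] at hS
    omega
  · rintro ⟨X, Y⟩ hXY
    simp only [coe_filter, mem_powersetCard, Set.mem_ofPred_eq, coe_product, Set.mem_prod,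
      mem_coe] at hXY ⊢
    obtain ⟨⟨hXA, hX⟩, hYA, hY⟩ := hXY
    have hdisj : Disjoint X Y := disjoint_of_subset_right hYA
      (disjoint_of_subset_left (hXA.trans inter_subset_left) disjoint_sdiff)
    refine ⟨⟨union_subset (hXA.trans inter_subset_right) (hYA.trans sdiff_subset), ?_⟩, ?_⟩
    · rw [card_union_of_disjoint hdisj, hX, hY]; omega
    · have : A ∩ (X ∪ Y) = X := by grind
      rw [this, hX]
  · intro S _
    change A ∩ S ∪ S \ A = S
    rw [union_comm, inter_comm, sdiff_union_inter]
  · rintro ⟨X, Y⟩ hXY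
    simp only [coe_product, Set.mem_prod, mem_coe, mem_powersetCard] at hXY
    obtain ⟨⟨hXA, -⟩, hYA, -⟩ := hXY
    ext x <;> simp only [mem_inter, mem_union, mem_sdiff] <;> grind

lemma card_filter_powersetCard_card_inter (A U : Finset α) (m : ℕ) (p : ℕ → Prop)
    [DecidablePred p] :
    #{S ∈ powersetCard m U | p #(A ∩ S)} =
      ∑ j ∈ range (m + 1),
        if p j then (#(A ∩ U)).choose j * (#(U \ A)).choose (m - j) else 0 := by
  rw [card_eq_sum_card_fiberwise (f := fun S => #(A ∩ S)) (t := range (m + 1))]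
  · refine sum_congr rfl fun j hj => ?_
    rw [← card_filter_powersetCard_card_inter_eq A U (Nat.lt_succ_iff.mp (mem_range.mp hj)),
      filter_filter]
    split_ifs with hpj
    · congr 1; exact filter_congr fun S _ => by constructor <;> rintro ⟨h1, h2⟩ <;> simp_all
    · exact card_eq_zero.mpr (filter_eq_empty_iff.mpr fun S _ ⟨h1, h2⟩ => hpj (h2 ▸ h1))
  · intro S hS
    rw [mem_coe, mem_filter, mem_powersetCard] at hS
    exact mem_range.mpr (Nat.lt_succ_of_le (hS.1.2 ▸ card_le_card inter_subset_right))

lemma card_filter_powersetCard_succ_mem_odd_card_inter {s E : Finset α} {a : α} (has : a ∈ s)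
    (haE : a ∈ E) (k : ℕ) :
    #{S ∈ powersetCard (k + 1) s | a ∈ S ∧ Odd #(E ∩ S)} =
      #{T ∈ powersetCard k (s.erase a) | Even #(E ∩ T)} := by
  rw [card_filter_powersetCard_succ_mem has]
  refine congrArg card (filter_congr fun T hT => ?_)
  have haT : a ∉ E ∩ T := fun h => by
    simpa using (mem_powersetCard.mp hT).1 (mem_inter.mp h).2
  rw [inter_insert_of_mem haE, card_insert_of_notMem haT, Nat.odd_add_one, Nat.not_odd_iff_even]

end Finset

lemma ZMod.eq_one_iff_ne_zero (a : ZMod 2) : a = 1 ↔ a ≠ 0 := by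
  revert a; decide

section BinaryVectors

variable {ι : Type*} [Fintype ι] [DecidableEq ι]

def binarySupport : (ι → ZMod 2) ≃ Finset ι where
  toFun h := {j | h j ≠ 0}
  invFun S j := if j ∈ S then 1 else 0
  left_inv h := funext fun j => by
    by_cases hj : h j = 0 <;> simp [hj, (ZMod.eq_one_iff_ne_zero _).mpr]
  right_inv S := by ext j; by_cases hj : j ∈ S <;> simp [hj]

lemma mem_binarySupport {h : ι → ZMod 2} {j : ι} : j ∈ binarySupport h ↔ h j = 1 := by
  simp [binarySupport, ZMod.eq_one_iff_ne_zero]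

lemma hammingNorm_eq_card_binarySupport (h : ι → ZMod 2) :
    hammingNorm h = #(binarySupport h) := rfl

lemma sum_mul_eq_card_inter_binarySupport (e h : ι → ZMod 2) :
    ∑ j, e j * h j = #(binarySupport e ∩ binarySupport h) := by
  have hmul : ∀ a b : ZMod 2, a * b = if a ≠ 0 ∧ b ≠ 0 then 1 else 0 := by decide
  simp only [hmul, sum_boole, binarySupport, Equiv.coe_fn_mk, filter_and]

lemma natCard_hammingNorm_eq_and (w : ℕ) (P : (ι → ZMod 2) → Prop) (Q : Finset ι → Prop)
    [DecidablePred Q] (hPQ : ∀ h, P h ↔ Q (binarySupport h)) :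
    Nat.card {h : ι → ZMod 2 // hammingNorm h = w ∧ P h} = #{S ∈ powersetCard w univ | Q S} := by
  refine (Nat.card_congr (binarySupport.subtypeEquiv (q := fun S => #S = w ∧ Q S)
    fun h => and_congr Iff.rfl (hPQ h))).trans ?_
  rw [Nat.card_eq_fintype_card, Fintype.card_subtype, ← univ_filter_card_eq, filter_filter]

end BinaryVectors

theorem statistical_decoding_q1_general
    (n w t : ℕ) (hw1 : 1 ≤ w)
    (e : Fin n → ZMod 2) (he : hammingNorm e = t)
    (i : Fin n) (hei : e i = 1) :
    (Nat.card {h : Fin n → ZMod 2 //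
        hammingNorm h = w ∧ h i = 1 ∧ ∑ j, e j * h j = 1} =
      ∑ j ∈ Finset.range w,
        if Even j then (t - 1).choose j * (n - t).choose (w - 1 - j) else 0) ∧
    (Nat.card {h : Fin n → ZMod 2 // hammingNorm h = w ∧ h i = 1} =
      (n - 1).choose (w - 1)) ∧
    (((Nat.card {h : Fin n → ZMod 2 //
        hammingNorm h = w ∧ h i = 1 ∧ ∑ j, e j * h j = 1} : ℝ) /
      (Nat.card {h : Fin n → ZMod 2 // hammingNorm h = w ∧ h i = 1} : ℝ)) =
      ((∑ j ∈ Finset.range w,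
        if Even j then ((t - 1).choose j * (n - t).choose (w - 1 - j) : ℝ) else 0) /
        ((n - 1).choose (w - 1) : ℝ))) := by
  obtain ⟨m, rfl⟩ := Nat.exists_eq_add_of_le' hw1
  set E := binarySupport e
  have hiE : i ∈ E := mem_binarySupport.mpr hei
  have hEi : #(E ∩ univ.erase i) = t - 1 := by
    rw [inter_erase, inter_univ, card_erase_of_mem hiE, ← he, hammingNorm_eq_card_binarySupport]
  have hEc : #(univ.erase i \ E) = n - t := by
    rw [erase_sdiff_comm, erase_eq_of_notMem fun h => (mem_sdiff.mp h).2 hiE, card_univ_sdiff,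
      Fintype.card_fin, ← he, hammingNorm_eq_card_binarySupport]
  have hodd : Nat.card {h : Fin n → ZMod 2 //
      hammingNorm h = m + 1 ∧ h i = 1 ∧ ∑ j, e j * h j = 1} =
      ∑ j ∈ range (m + 1),
        if Even j then (t - 1).choose j * (n - t).choose (m + 1 - 1 - j) else 0 := by
    rw [natCard_hammingNorm_eq_and _ _ (fun S => i ∈ S ∧ Odd #(E ∩ S)) fun h => by
        rw [mem_binarySupport, sum_mul_eq_card_inter_binarySupport, ZMod.natCast_eq_one_iff_odd],
      card_filter_powersetCard_succ_mem_odd_card_inter (mem_univ i) hiE,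
      card_filter_powersetCard_card_inter, hEi, hEc, Nat.add_sub_cancel]
  have hall : Nat.card {h : Fin n → ZMod 2 // hammingNorm h = m + 1 ∧ h i = 1} =
      (n - 1).choose (m + 1 - 1) := by
    rw [natCard_hammingNorm_eq_and _ _ (fun S => {i} ⊆ S) fun h => by
        rw [singleton_subset_iff, mem_binarySupport],
      card_filter_powersetCard_subset _ _ _ (subset_univ _) (by simp)]
    simp
  refine ⟨hodd, hall, ?_⟩
  rw [hodd, hall]
  push_cast
  rfl

/-- count and probability of `⟨e,h⟩ = 1` over weight-`w` vectors `h`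
with `h i = 1`, when the error position `i` satisfies `e i = 1`. -/
theorem statistical_decoding_q1
    (n w t : ℕ) (hw1 : 1 ≤ w) (hwn : w ≤ n) (ht1 : 1 ≤ t) (htn : t ≤ n)
    (e : Fin n → ZMod 2) (he : hammingNorm e = t)
    (i : Fin n) (hei : e i = 1) :
    (Nat.card {h : Fin n → ZMod 2 //
        hammingNorm h = w ∧ h i = 1 ∧ ∑ j, e j * h j = 1} =
      ∑ j ∈ Finset.range w,
        if Even j then (t - 1).choose j * (n - t).choose (w - 1 - j) else 0) ∧
    (Nat.card {h : Fin n → ZMod 2 // hammingNorm h = w ∧ h i = 1} =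
      (n - 1).choose (w - 1)) ∧
    (((Nat.card {h : Fin n → ZMod 2 //
        hammingNorm h = w ∧ h i = 1 ∧ ∑ j, e j * h j = 1} : ℝ) /
      (Nat.card {h : Fin n → ZMod 2 // hammingNorm h = w ∧ h i = 1} : ℝ)) =
      ((∑ j ∈ Finset.range w,
        if Even j then ((t - 1).choose j * (n - t).choose (w - 1 - j) : ℝ) else 0) /
        ((n - 1).choose (w - 1) : ℝ))) :=
  statistical_decoding_q1_general n w t hw1 e he i hei
end

section
/- Let n, w, t be integers with 1 ≤ w ≤ n and 1 ≤ t ≤ n−1, let e ∈ F₂ⁿ be a vector of Hamming weight t, and let i be a coordinate with e_i = 0. Then the number of vectors h ∈ F₂ⁿ of Hamming weight w with h_i = 1 and ⟨e,h⟩ = 1 (inner product modulo 2) equals Σ_{0≤j≤w−1, j odd} C(t,j)·C(n−t−1,w−1−j). Consequently the probability q₀ that ⟨e,h⟩ = 1 for h uniform on {h : w_H(h)=w, h_i=1} equals (Σ_{0≤j≤w−1, j odd} C(t,j)·C(n−t−1,w−1−j))/C(n−1,w−1), which depends neither on e nor on i. -/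
/-!
Identify a binary vector with its support, so that `⟨e, h⟩ = 1` says that
`supp e ∩ supp h` has odd size. Removing `i` from `supp h` turns the vectors counted into the
`(w - 1)`-subsets `T` of the other `n - 1` coordinates with `|supp e ∩ T|` odd
(as `i ∉ supp e`); splitting `T` into its `j` points inside `supp e` and its `w - 1 - j` points
outside gives the sum over odd `j`.
-/

open Finset

lemma ZMod.two_eq_zero_or_one (a : ZMod 2) : a = 0 ∨ a = 1 := by
  decide +revert

section SupportEquiv

variable {ι : Type*} [Fintype ι] [DecidableEq ι]

def supportEquiv : (ι → ZMod 2) ≃ Finset ι where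
  toFun h := {j | h j ≠ 0}
  invFun S j := if j ∈ S then 1 else 0
  left_inv h := by
    funext j
    rcases (h j).two_eq_zero_or_one with hj | hj <;> simp [hj]
  right_inv S := by
    ext j
    by_cases hj : j ∈ S <;> simp [hj]

lemma hammingNorm_eq_card_supportEquiv (h : ι → ZMod 2) : hammingNorm h = #(supportEquiv h) :=
  rfl

lemma eq_one_iff_mem_supportEquiv (h : ι → ZMod 2) (i : ι) :
    h i = 1 ↔ i ∈ supportEquiv h := by
  rcases (h i).two_eq_zero_or_one with hi | hi <;> simp [supportEquiv, hi]

lemma sum_mul_eq_card_inter_supportEquiv (e h : ι → ZMod 2) :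
    ∑ j, e j * h j = (#(supportEquiv e ∩ supportEquiv h) : ZMod 2) := by
  have hterm (j : ι) : e j * h j = if j ∈ supportEquiv e ∩ supportEquiv h then 1 else 0 := by
    rcases (e j).two_eq_zero_or_one with he | he <;>
      rcases (h j).two_eq_zero_or_one with hh | hh <;> simp [supportEquiv, he, hh]
  simp only [hterm, sum_boole, filter_mem_eq_inter, univ_inter]

lemma natCard_subtype_eq_card_filter_supportEquiv {p : (ι → ZMod 2) → Prop}
    (P : Finset ι → Prop) [DecidablePred P] (hpP : ∀ h, p h ↔ P (supportEquiv h)) :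
    Nat.card {h // p h} = #{S | P S} := by
  rw [Nat.card_congr (supportEquiv.subtypeEquiv hpP), Nat.card_eq_fintype_card,
    Fintype.card_subtype]

end SupportEquiv

section PowersetCard

variable {α : Type*} [DecidableEq α]

lemma card_filter_powersetCard_card_inter {E U : Finset α} (hEU : E ⊆ U) (j k : ℕ) :
    #{T ∈ U.powersetCard (j + k) | #(E ∩ T) = j} = (#E).choose j * (#U - #E).choose k := by
  rw [← card_sdiff_of_subset hEU, ← card_powersetCard, ← card_powersetCard, ← card_product]
  refine card_nbij' (fun T => (E ∩ T, T \ E)) (fun p => p.1 ∪ p.2) ?_ ?_ ?_ ?_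
  · intro T hT
    simp only [coe_filter, mem_powersetCard, Set.mem_ofPred_eq, coe_product, Set.mem_prod,
      mem_coe] at hT ⊢
    grind
  · rintro ⟨P, Q⟩ hPQ
    simp only [coe_product, Set.mem_prod, mem_coe, mem_powersetCard] at hPQ
    obtain ⟨⟨hPE, hP⟩, hQ, hQk⟩ := hPQ
    have hdisj : Disjoint P Q := disjoint_sdiff.mono hPE hQ
    have hPQE : E ∩ (P ∪ Q) = P := by ext x; grind
    simp only [coe_filter, mem_powersetCard, Set.mem_ofPred_eq, card_union_of_disjoint hdisj, hPQE]
    grind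
  · intro T hT
    simp only [coe_filter, mem_powersetCard, Set.mem_ofPred_eq] at hT
    grind
  · rintro ⟨P, Q⟩ hPQ
    simp only [coe_product, Set.mem_prod, mem_coe, mem_powersetCard] at hPQ
    ext x <;> grind

lemma card_filter_powersetCard_odd_card_inter {E U : Finset α} (hEU : E ⊆ U) (m : ℕ) :
    #{T ∈ U.powersetCard m | Odd #(E ∩ T)} =
      ∑ j ∈ range (m + 1), if Odd j then (#E).choose j * (#U - #E).choose (m - j) else 0 := by
  have hmaps :
      ∀ T ∈ {T ∈ U.powersetCard m | Odd #(E ∩ T)}, #(E ∩ T) ∈ range (m + 1) := by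
    intro T hT
    have := card_le_card (inter_subset_right (s₁ := E) (s₂ := T))
    grind
  rw [card_eq_sum_card_fiberwise hmaps]
  refine sum_congr rfl fun j hj => ?_
  rw [filter_filter]
  split_ifs with hodd
  · rw [← card_filter_powersetCard_card_inter hEU, Nat.add_sub_cancel' (by grind)]
    congr 1
    exact filter_congr fun T _ => by grind
  · rw [card_eq_zero, filter_eq_empty_iff]
    grind

lemma card_filter_card_eq_add_one_and_mem [Fintype α] (i : α) (P : Finset α → Prop)
    [DecidablePred P] (m : ℕ) :
    #{S : Finset α | #S = m + 1 ∧ i ∈ S ∧ P S} =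
      #{T ∈ (univ.erase i).powersetCard m | P (insert i T)} := by
  refine card_nbij' (·.erase i) (insert i) ?_ ?_ ?_ ?_
  · intro S hS
    simp only [coe_filter, mem_univ, true_and, Set.mem_ofPred_eq] at hS
    simp only [coe_filter, Set.mem_ofPred_eq, mem_powersetCard, insert_erase hS.2.1]
    grind
  · intro T hT
    simp only [coe_filter, mem_univ, true_and, Set.mem_ofPred_eq, mem_powersetCard] at hT ⊢
    grind
  · intro S hS
    simp only [coe_filter, mem_univ, true_and, Set.mem_ofPred_eq] at hS
    exact insert_erase hS.2.1
  · intro T hT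
    simp only [coe_filter, Set.mem_ofPred_eq, mem_powersetCard] at hT
    grind

end PowersetCard

theorem statistical_decoding_q0_general
    (n w t : ℕ) (hw1 : 1 ≤ w)
    (e : Fin n → ZMod 2) (he : hammingNorm e = t)
    (i : Fin n) (hei : e i = 0) :
    (Nat.card {h : Fin n → ZMod 2 //
        hammingNorm h = w ∧ h i = 1 ∧ ∑ j, e j * h j = 1} =
      ∑ j ∈ Finset.range w,
        if Odd j then t.choose j * (n - t - 1).choose (w - 1 - j) else 0) ∧
    (Nat.card {h : Fin n → ZMod 2 // hammingNorm h = w ∧ h i = 1} =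
      (n - 1).choose (w - 1)) ∧
    (((Nat.card {h : Fin n → ZMod 2 //
        hammingNorm h = w ∧ h i = 1 ∧ ∑ j, e j * h j = 1} : ℝ) /
      (Nat.card {h : Fin n → ZMod 2 // hammingNorm h = w ∧ h i = 1} : ℝ)) =
      ((∑ j ∈ Finset.range w,
        if Odd j then (t.choose j * (n - t - 1).choose (w - 1 - j) : ℝ) else 0) /
        ((n - 1).choose (w - 1) : ℝ))) := by
  obtain ⟨m, rfl⟩ : ∃ m, w = m + 1 := ⟨w - 1, by omega⟩
  set E := supportEquiv e
  have hiE : i ∉ E := by simp [E, ← eq_one_iff_mem_supportEquiv, hei]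
  have hEU : E ⊆ univ.erase i := fun j hj =>
    mem_erase.2 ⟨ne_of_mem_of_not_mem hj hiE, mem_univ j⟩
  have hcardE : #E = t := he
  have hcard_compl : #(univ.erase i) - #E = n - t - 1 := by
    rw [card_erase_of_mem (mem_univ i), card_univ, Fintype.card_fin, hcardE, Nat.sub_right_comm]
  have hodd : Nat.card {h : Fin n → ZMod 2 //
      hammingNorm h = m + 1 ∧ h i = 1 ∧ ∑ j, e j * h j = 1} =
      ∑ j ∈ range (m + 1), if Odd j then t.choose j * (n - t - 1).choose (m - j) else 0 := by
    rw [natCard_subtype_eq_card_filter_supportEquiv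
      (fun S => #S = m + 1 ∧ i ∈ S ∧ Odd #(E ∩ S)) fun h => by
        simp only [hammingNorm_eq_card_supportEquiv, eq_one_iff_mem_supportEquiv,
          sum_mul_eq_card_inter_supportEquiv, ZMod.natCast_eq_one_iff_odd, E],
      card_filter_card_eq_add_one_and_mem]
    simp only [inter_insert_of_notMem hiE]
    rw [card_filter_powersetCard_odd_card_inter hEU, hcard_compl, hcardE]
  have hall : Nat.card {h : Fin n → ZMod 2 // hammingNorm h = m + 1 ∧ h i = 1} =
      (n - 1).choose m := by
    rw [natCard_subtype_eq_card_filter_supportEquiv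
      (fun S => #S = m + 1 ∧ i ∈ S ∧ True) fun h => by
        simp only [hammingNorm_eq_card_supportEquiv, eq_one_iff_mem_supportEquiv, and_true],
      card_filter_card_eq_add_one_and_mem]
    simp
  simp only [Nat.add_sub_cancel, hodd, hall, true_and]
  push_cast
  rfl

/-- count and probability of `⟨e,h⟩ = 1` over weight-`w` vectors `h`
with `h i = 1`, when the position `i` satisfies `e i = 0`. -/
theorem statistical_decoding_q0
    (n w t : ℕ) (hw1 : 1 ≤ w) (hwn : w ≤ n) (ht1 : 1 ≤ t) (htn : t ≤ n - 1)
    (e : Fin n → ZMod 2) (he : hammingNorm e = t)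
    (i : Fin n) (hei : e i = 0) :
    (Nat.card {h : Fin n → ZMod 2 //
        hammingNorm h = w ∧ h i = 1 ∧ ∑ j, e j * h j = 1} =
      ∑ j ∈ Finset.range w,
        if Odd j then t.choose j * (n - t - 1).choose (w - 1 - j) else 0) ∧
    (Nat.card {h : Fin n → ZMod 2 // hammingNorm h = w ∧ h i = 1} =
      (n - 1).choose (w - 1)) ∧
    (((Nat.card {h : Fin n → ZMod 2 //
        hammingNorm h = w ∧ h i = 1 ∧ ∑ j, e j * h j = 1} : ℝ) /
      (Nat.card {h : Fin n → ZMod 2 // hammingNorm h = w ∧ h i = 1} : ℝ)) =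
      ((∑ j ∈ Finset.range w,
        if Odd j then (t.choose j * (n - t - 1).choose (w - 1 - j) : ℝ) else 0) /
        ((n - 1).choose (w - 1) : ℝ))) :=
  statistical_decoding_q0_general n w t hw1 e he i hei
end

section
/- For all integers n, w, t with 2 ≤ w ≤ n and 1 ≤ t ≤ n, the bias ε₁(n,w,t) satisfies ε₁(n,w,t) = −((−2)^{w−2}/C(n−1,w−1)) · p_{w−1}^{n−1}(t−1), where p_v^m is the Krawtchouk polynomial of degree v and order m evaluated at the integer t−1. -/
open Finset

/-- The bias of statistical decoding on an error position. -/
noncomputable def eps1 (n w t : ℕ) : ℝ :=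
  (∑ j ∈ Finset.range w,
      if Even j then ((t - 1).choose j * (n - t).choose (w - 1 - j) : ℝ) else 0) /
    ((n - 1).choose (w - 1) : ℝ) - 1 / 2

/-- Generalized binomial coefficient `C(x, j) = x (x-1) ⋯ (x-j+1) / j!`. -/
noncomputable def genChoose (x : ℝ) (j : ℕ) : ℝ :=
  (∏ k ∈ Finset.range j, (x - k)) / (j.factorial : ℝ)

/-- The Krawtchouk polynomial of degree `v` and order `m`, evaluated at `x`. -/
noncomputable def krawtchouk (m v : ℕ) (x : ℝ) : ℝ :=
  ((-1 : ℝ) ^ v / 2 ^ v) *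
    ∑ j ∈ Finset.range (v + 1),
      (-1 : ℝ) ^ j * genChoose x j * genChoose ((m : ℝ) - x) (v - j)

/-!
Proof idea: by Vandermonde's identity the numbers `C(t-1, j) C(n-t, w-1-j)`, `j < w`, sum to
`C(n-1, w-1)`, so the sum over even `j` is half of that total plus half of the alternating sum.
Hence `ε₁` is the alternating sum divided by `2 C(n-1, w-1)`, and at the integer point `t - 1`
the alternating sum is, up to the factor `(-2)^(w-1)`, the Krawtchouk polynomial.
-/

theorem genChoose_natCast (a j : ℕ) : genChoose (a : ℝ) j = (a.choose j : ℝ) := by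
  rw [genChoose, ← descPochhammer_eval_eq_prod_range, Nat.cast_choose_eq_descPochhammer_div]

theorem krawtchouk_natCast {m x : ℕ} (hx : x ≤ m) (v : ℕ) :
    krawtchouk m v (x : ℝ) = (-1 : ℝ) ^ v / 2 ^ v *
      ∑ j ∈ range (v + 1), (-1 : ℝ) ^ j * ((x.choose j : ℝ) * ((m - x).choose (v - j) : ℝ)) := by
  simp only [krawtchouk, ← Nat.cast_sub hx, genChoose_natCast, mul_assoc]

theorem Nat.sum_range_choose_mul_choose_sub (a b v : ℕ) :
    ∑ j ∈ range (v + 1), a.choose j * b.choose (v - j) = (a + b).choose v := by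
  rw [Nat.add_choose_eq, Finset.Nat.sum_antidiagonal_eq_sum_range_succ_mk]

theorem two_mul_sum_ite_even {R : Type*} [CommRing R] (s : Finset ℕ) (f : ℕ → R) :
    2 * ∑ j ∈ s, (if Even j then f j else 0) = ∑ j ∈ s, f j + ∑ j ∈ s, (-1) ^ j * f j := by
  rw [mul_sum, ← sum_add_distrib]
  refine sum_congr rfl fun j _ => ?_
  rcases Nat.even_or_odd j with h | h
  · rw [if_pos h, h.neg_one_pow]; ring
  · rw [if_neg (Nat.not_even_iff_odd.mpr h), h.neg_one_pow]; ring

theorem eps1_succ {n v t : ℕ} (hv : v < n) (ht : 1 ≤ t) (htn : t ≤ n) :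
    eps1 n (v + 1) t = (∑ j ∈ range (v + 1),
      (-1 : ℝ) ^ j * (((t - 1).choose j : ℝ) * ((n - t).choose (v - j) : ℝ))) /
        (2 * ((n - 1).choose v : ℝ)) := by
  have hC : ((n - 1).choose v : ℝ) ≠ 0 := Nat.cast_ne_zero.mpr (Nat.choose_pos (by omega)).ne'
  have vandermonde : ∑ j ∈ range (v + 1),
      ((t - 1).choose j : ℝ) * ((n - t).choose (v - j) : ℝ) = (n - 1).choose v := by
    rw [show n - 1 = t - 1 + (n - t) by omega, ← Nat.sum_range_choose_mul_choose_sub]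
    push_cast
    rfl
  have halve := two_mul_sum_ite_even (range (v + 1))
    fun j => ((t - 1).choose j : ℝ) * ((n - t).choose (v - j) : ℝ)
  rw [vandermonde] at halve
  simp only [eps1, Nat.add_sub_cancel]
  field_simp
  simp only [← mul_assoc] at halve
  linear_combination halve

theorem neg_neg_two_pow_div_mul_neg_one_pow_div_two_pow (v : ℕ) (s c : ℝ) :
    -((-2 : ℝ) ^ v / c) * ((-1) ^ (v + 1) / 2 ^ (v + 1) * s) = s / (2 * c) := by
  have hsign : (-2 : ℝ) ^ v * (-1) ^ (v + 1) = -2 ^ v := by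
    rw [pow_succ, ← mul_assoc, ← mul_pow]; norm_num
  calc -((-2 : ℝ) ^ v / c) * ((-1) ^ (v + 1) / 2 ^ (v + 1) * s)
      = -((-2 : ℝ) ^ v * (-1) ^ (v + 1)) / 2 ^ (v + 1) * s / c := by ring
    _ = s / (2 * c) := by rw [hsign, pow_succ]; field_simp

/-- `ε₁(n,w,t) = −((−2)^{w−2}/C(n−1,w−1)) · p_{w−1}^{n−1}(t−1)`. -/
theorem eps1_eq_krawtchouk (n w t : ℕ) (hw : 2 ≤ w) (hwn : w ≤ n)
    (ht : 1 ≤ t) (htn : t ≤ n) :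
    eps1 n w t =
      -(((-2 : ℝ) ^ (w - 2)) / ((n - 1).choose (w - 1) : ℝ)) *
        krawtchouk (n - 1) (w - 1) ((t : ℝ) - 1) := by
  obtain ⟨v, rfl⟩ : ∃ v, w = v + 1 + 1 := ⟨w - 2, by omega⟩
  have hpoint : (t : ℝ) - 1 = ((t - 1 : ℕ) : ℝ) := by rw [Nat.cast_sub ht, Nat.cast_one]
  rw [eps1_succ (by omega) ht htn, hpoint, krawtchouk_natCast (by omega),
    show n - 1 - (t - 1) = n - t by omega, show v + 1 + 1 - 2 = v from rfl, Nat.add_sub_cancel]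
  exact (neg_neg_two_pow_div_mul_neg_one_pow_div_two_pow v _ _).symm
end
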